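/- arXiv:2504.09970 — 2 statements merged into one kernel-verified Lean document; each statement's English description precedes it below -/
import Mathlib

section
/- Let z₁, ..., zₙ ∈ 𝕃^{κ,d} (Lorentz model, κ < 0) and c₁, ..., cₙ ≥ 0 nonnegative weights not all zero. The point z* that maximizes ⟨Σᵢ cᵢ zᵢ, z⟩_L over z ∈ 𝕃^{κ,d} subject to ⟨z,z⟩_L = 1/κ, equivalently minimizes Σᵢ cᵢ ‖z - zᵢ‖²_L, is given by z* = η · Σᵢ cᵢ zᵢ with η = 1/(√(-κ)·|‖Σᵢ cᵢ zᵢ‖_L|), i.e., the scalar η is determined by the constraint ⟨z*, z*⟩_L = 1/κ. -/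
open Finset

/-- Minkowski inner product on `ℝ^{d+1}`: `⟨x,y⟩_L = -x₀y₀ + Σᵢ xᵢyᵢ`. -/
noncomputable def mink {d : ℕ} (x y : Fin (d + 1) → ℝ) : ℝ :=
  -(x 0 * y 0) + ∑ i : Fin d, x i.succ * y i.succ

/-- Lorentz norm `‖u‖_L = √|⟨u,u⟩_L|`. -/
noncomputable def lnorm {d : ℕ} (u : Fin (d + 1) → ℝ) : ℝ :=
  Real.sqrt |mink u u|

lemma mink_comm {d : ℕ} (x y : Fin (d + 1) → ℝ) : mink x y = mink y x := by
  simp [mink, mul_comm]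

lemma mink_smul_right {d : ℕ} (a : ℝ) (x y : Fin (d + 1) → ℝ) :
    mink x (a • y) = a * mink x y := by
  simp only [mink, Pi.smul_apply, smul_eq_mul]
  rw [mul_add, Finset.mul_sum]
  congr 1
  · ring
  · exact Finset.sum_congr rfl (fun i _ => by ring)

lemma mink_sum_right {d n : ℕ} (x : Fin (d + 1) → ℝ) (f : Fin n → Fin (d + 1) → ℝ) :
    mink x (∑ i, f i) = ∑ i, mink x (f i) := by
  simp [mink, Finset.sum_apply, Finset.mul_sum, Finset.sum_add_distrib]
  rw [Finset.sum_comm]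

lemma mink_expand {d : ℕ} (w x : Fin (d + 1) → ℝ) :
    mink (w - x) (w - x) = mink w w - 2 * mink w x + mink x x := by
  simp [mink, Pi.sub_apply, sub_mul, mul_sub, Finset.sum_sub_distrib, mul_comm]
  ring

lemma rev_cs {d : ℕ} (u v : Fin (d + 1) → ℝ) (hu : mink u u < 0) (hu0 : 0 < u 0)
    (hv : mink v v < 0) (hv0 : 0 < v 0) :
    mink u v ≤ -(Real.sqrt (-mink u u) * Real.sqrt (-mink v v)) := by
  set P := Real.sqrt (∑ i : Fin d, u i.succ * u i.succ) with hP
  set Q := Real.sqrt (∑ i : Fin d, v i.succ * v i.succ) with hQ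
  have hPn : 0 ≤ P := Real.sqrt_nonneg _
  have hQn : 0 ≤ Q := Real.sqrt_nonneg _
  have hP2 : P * P = ∑ i : Fin d, u i.succ * u i.succ := by
    rw [hP, Real.mul_self_sqrt]
    exact Finset.sum_nonneg fun i _ => mul_self_nonneg _
  have hQ2 : Q * Q = ∑ i : Fin d, v i.succ * v i.succ := by
    rw [hQ, Real.mul_self_sqrt]
    exact Finset.sum_nonneg fun i _ => mul_self_nonneg _
  have hcs2 : (∑ i : Fin d, u i.succ * v i.succ) ^ 2 ≤
      (∑ i : Fin d, u i.succ ^ 2) * (∑ i : Fin d, v i.succ ^ 2) :=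
    Finset.sum_mul_sq_le_sq_mul_sq univ _ _
  have hsq : ∀ w : Fin (d+1) → ℝ, (∑ i : Fin d, w i.succ ^ 2) = ∑ i : Fin d, w i.succ * w i.succ :=
    fun w => Finset.sum_congr rfl fun i _ => sq (w i.succ) ▸ by ring
  have hcs : (∑ i : Fin d, u i.succ * v i.succ) ≤ P * Q := by
    nlinarith [le_abs_self (∑ i : Fin d, u i.succ * v i.succ),
      sq_abs (∑ i : Fin d, u i.succ * v i.succ), hsq u, hsq v,
      mul_nonneg hPn hQn, abs_nonneg (∑ i : Fin d, u i.succ * v i.succ)]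
  have huP : P < u 0 := by
    have : P * P < u 0 * u 0 := by
      have := hu; simp only [mink] at this; nlinarith
    nlinarith
  have hvQ : Q < v 0 := by
    have : Q * Q < v 0 * v 0 := by
      have := hv; simp only [mink] at this; nlinarith
    nlinarith
  have ha : -mink u u = u 0 * u 0 - P * P := by simp only [mink]; rw [hP2]; ring
  have hb : -mink v v = v 0 * v 0 - Q * Q := by simp only [mink]; rw [hQ2]; ring
  have hkey : Real.sqrt (-mink u u) * Real.sqrt (-mink v v) ≤ u 0 * v 0 - P * Q := by
    rw [← Real.sqrt_mul (by linarith)]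
    have h1 : (-mink u u) * (-mink v v) ≤ (u 0 * v 0 - P * Q) ^ 2 := by
      rw [ha, hb]; nlinarith [sq_nonneg (u 0 * Q - v 0 * P)]
    calc Real.sqrt ((-mink u u) * (-mink v v)) ≤ Real.sqrt ((u 0 * v 0 - P * Q) ^ 2) :=
          Real.sqrt_le_sqrt h1
      _ = u 0 * v 0 - P * Q := by
          rw [Real.sqrt_sq (by nlinarith)]
  have hgoal : mink u v = -(u 0 * v 0) + ∑ i : Fin d, u i.succ * v i.succ := rfl
  rw [hgoal]
  linarith

/-- Geometric centroid in the Lorentz model: with `s = Σᵢ cᵢ zᵢ` timelike and future-pointing,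
the point `z* = η • s` with `η = 1/(√(-κ)·|‖s‖_L|)` lies on the Lorentz model
(`⟨z*,z*⟩_L = 1/κ`) and maximizes `⟨s, z⟩_L` over points `z` of the Lorentz model,
equivalently minimizes `Σᵢ cᵢ ‖z - zᵢ‖²_L`. -/
theorem lorentz_centroid {d n : ℕ} (κ : ℝ) (hκ : κ < 0)
    (c : Fin n → ℝ) (hc : ∀ i, 0 ≤ c i)
    (z : Fin n → Fin (d + 1) → ℝ)
    (hz : ∀ i, mink (z i) (z i) = 1 / κ ∧ 0 < z i 0)
    (s : Fin (d + 1) → ℝ) (hs : s = ∑ i, c i • z i)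
    (hts : mink s s < 0) (hs0 : 0 < s 0)
    (η : ℝ) (hη : η = 1 / (Real.sqrt (-κ) * |lnorm s|))
    (zstar : Fin (d + 1) → ℝ) (hzstar : zstar = η • s) :
    mink zstar zstar = 1 / κ ∧ 0 < zstar 0 ∧
      (∀ z' : Fin (d + 1) → ℝ, mink z' z' = 1 / κ → 0 < z' 0 →
        mink s z' ≤ mink s zstar) ∧
      (∀ z' : Fin (d + 1) → ℝ, mink z' z' = 1 / κ → 0 < z' 0 →
        ∑ i, c i * mink (zstar - z i) (zstar - z i) ≤
          ∑ i, c i * mink (z' - z i) (z' - z i)) := by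
  have hκ' : (0:ℝ) < -κ := by linarith
  set A : ℝ := -mink s s with hAdef
  have hApos : 0 < A := by simpa [hAdef] using hts
  have hAs : Real.sqrt A * Real.sqrt A = A := Real.mul_self_sqrt hApos.le
  have hks : Real.sqrt (-κ) * Real.sqrt (-κ) = -κ := Real.mul_self_sqrt hκ'.le
  have hkpos : 0 < Real.sqrt (-κ) := Real.sqrt_pos.mpr hκ'
  have hsApos : 0 < Real.sqrt A := Real.sqrt_pos.mpr hApos
  have hlnorm : lnorm s = Real.sqrt A := by
    rw [lnorm, abs_of_neg hts]
  have hηv : η = 1 / (Real.sqrt (-κ) * Real.sqrt A) := by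
    rw [hη, hlnorm, abs_of_nonneg (Real.sqrt_nonneg _)]
  have hηpos : 0 < η := by
    rw [hηv]; positivity
  have hA : mink s s = -A := by rw [hAdef]; ring
  -- part 1
  have part1 : mink zstar zstar = 1 / κ := by
    have h1 : mink zstar zstar = η * (η * mink s s) := by
      rw [hzstar, mink_smul_right, mink_comm, mink_smul_right, mink_comm]
    rw [h1, hηv, hA]
    have hkne : Real.sqrt (-κ) ≠ 0 := ne_of_gt hkpos
    have hAne : Real.sqrt A ≠ 0 := ne_of_gt hsApos
    have hκne : κ ≠ 0 := ne_of_lt hκ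
    field_simp
    nlinarith [hAs, hks]
  -- part 2
  have part2 : 0 < zstar 0 := by
    have : zstar 0 = η * s 0 := by rw [hzstar]; simp
    rw [this]; exact mul_pos hηpos hs0
  -- part 3
  have part3 : ∀ z' : Fin (d + 1) → ℝ, mink z' z' = 1 / κ → 0 < z' 0 →
      mink s z' ≤ mink s zstar := by
    intro z' h1 h2
    have hz'neg : mink z' z' < 0 := by rw [h1]; exact div_neg_of_pos_of_neg one_pos hκ
    have hrc := rev_cs s z' hts hs0 hz'neg h2
    have heq : -(Real.sqrt (-mink s s) * Real.sqrt (-mink z' z')) = mink s zstar := by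
      rw [hzstar, mink_smul_right, h1, hηv, hA]
      have : -(1/κ) = (-κ)⁻¹ := by rw [one_div, inv_neg]
      rw [this, Real.sqrt_inv]
      have hkne : Real.sqrt (-κ) ≠ 0 := ne_of_gt hkpos
      have hAne : Real.sqrt A ≠ 0 := ne_of_gt hsApos
      field_simp
      nlinarith [hAs]
    linarith [heq ▸ hrc]
  -- part 4
  have key : ∀ w : Fin (d + 1) → ℝ, mink w w = 1 / κ →
      ∑ i, c i * mink (w - z i) (w - z i) = (∑ i, c i * (2 / κ)) - 2 * mink s w := by
    intro w hw
    have e1 : ∀ i, c i * mink (w - z i) (w - z i) = c i * (2 / κ) - 2 * mink w (c i • z i) := by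
      intro i
      rw [mink_expand, hw, (hz i).1, mink_smul_right]
      ring
    calc ∑ i, c i * mink (w - z i) (w - z i)
        = ∑ i, (c i * (2 / κ) - 2 * mink w (c i • z i)) :=
          Finset.sum_congr rfl fun i _ => e1 i
      _ = (∑ i, c i * (2 / κ)) - 2 * ∑ i, mink w (c i • z i) := by
          rw [Finset.sum_sub_distrib, Finset.mul_sum]
      _ = (∑ i, c i * (2 / κ)) - 2 * mink s w := by
          rw [← mink_sum_right, ← hs, mink_comm]
  refine ⟨part1, part2, part3, ?_⟩
  intro z' h1 h2
  rw [key zstar part1, key z' h1]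
  linarith [part3 z' h1 h2]
end

section
/- Let G be a finite weighted graph with total volume V = Vol(G) > 0, and T a partitioning tree of height H. For each non-root tree node α at level h with volume V_α > 0, parent volume V_{α⁻}, and boundary weight g_α ≥ 0, let φ_α = g_α / V_α denote the conductance of the module T_α (assuming Vol(T_α) ≤ V/2 so that min(V_α, V - V_α) = V_α), and Φ = min_α φ_α. Then the structural information H^T(G) = -(1/V) Σ_α g_α log₂(V_α / V_{α⁻}) satisfies H^T(G) ≥ Φ · H¹(G), where H¹(G) = -(1/V) Σᵥ dᵥ log₂(dᵥ/V) is the one-dimensional structural entropy. -/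
open Finset Real

/-- Structural information bounds conductance times one-dimensional structural entropy.

A partitioning tree of height `H` on a finite weighted graph is encoded by a level-wise
class assignment `m : ℕ → V → ι` (level 0 is the root whose module is all of `V`, level
`H` modules are singletons, and each level refines the previous one).  Writing the
structural information node-wise, if every module at levels `1..H` has volume at most
half the total volume and conductance at least `Φ`, then `H^T(G) ≥ Φ · H¹(G)`. -/
theorem structural_info_ge_conductance_mul_H1
    {V ι : Type*} [Fintype V] [Fintype ι] [DecidableEq V] [DecidableEq ι]
    (A : V → V → ℝ) (hsymm : ∀ i j, A i j = A j i) (hnn : ∀ i j, 0 ≤ A i j)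
    (H : ℕ) (hH : 1 ≤ H)
    (m : ℕ → V → ι)
    (hroot : ∀ u v, m 0 u = m 0 v)
    (hleaf : ∀ u v, m H u = m H v → u = v)
    (hrefine : ∀ h, h < H → ∀ u v, m (h + 1) u = m (h + 1) v → m h u = m h v)
    (deg : V → ℝ) (hdeg : ∀ v, deg v = ∑ j, A v j) (hdpos : ∀ v, 0 < deg v)
    (Vol : ℝ) (hVol : Vol = ∑ v, deg v)
    -- volume of the module containing `v` at level `h`
    (volAt : ℕ → V → ℝ)
    (hvolAt : ∀ h v, volAt h v = ∑ u ∈ univ.filter (fun u => m h u = m h v), deg u)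
    -- boundary weight of the module containing `v` at level `h`
    (gAt : ℕ → V → ℝ)
    (hgAt : ∀ h v, gAt h v = ∑ i ∈ univ.filter (fun i => m h i = m h v),
        ∑ j ∈ univ.filter (fun j => m h j ≠ m h v), A i j)
    -- each internal module has volume at most half the total volume
    (hhalf : ∀ h ∈ Icc 1 H, ∀ v, 2 * volAt h v ≤ Vol)
    -- `Φ` lower-bounds the conductance of every internal module
    (Φ : ℝ)
    (hΦ : ∀ h ∈ Icc 1 H, ∀ v, Φ ≤ gAt h v / volAt h v)
    -- structural information of the tree, node-wise formulation
    (SI : ℝ)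
    (hSI : SI = -(1 / Vol) * ∑ h ∈ Icc 1 H, ∑ v,
        (deg v - ∑ j ∈ univ.filter (fun j => m h j = m h v), A v j)
          * logb 2 (volAt h v / volAt (h - 1) v))
    -- one-dimensional structural entropy
    (H1 : ℝ)
    (hH1 : H1 = -(1 / Vol) * ∑ v, deg v * logb 2 (deg v / Vol)) :
    Φ * H1 ≤ SI := by
  classical
  rcases isEmpty_or_nonempty V with hV | hV
  · simp [hSI, hH1, Finset.univ_eq_empty]
  have hVolpos : 0 < Vol := by
    rw [hVol]; exact Finset.sum_pos (fun v _ => hdpos v) Finset.univ_nonempty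
  -- basic congruences
  have hvol_congr : ∀ h (u v : V), m h u = m h v → volAt h u = volAt h v := by
    intro h u v huv
    rw [hvolAt, hvolAt]
    apply Finset.sum_congr _ (fun _ _ => rfl)
    ext x; simp [huv]
  have hmono : ∀ h, 1 ≤ h → h ≤ H → ∀ u v : V, m h u = m h v →
      m (h - 1) u = m (h - 1) v := by
    intro h h1 h2 u v huv
    have he : h - 1 + 1 = h := Nat.succ_pred_eq_of_pos h1
    exact hrefine (h - 1) (by omega) u v (by rwa [he])
  have hvolpos : ∀ h (v : V), 0 < volAt h v := by
    intro h v
    rw [hvolAt]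
    exact Finset.sum_pos (fun u _ => hdpos u) ⟨v, by simp⟩
  have hvol0 : ∀ v : V, volAt 0 v = Vol := by
    intro v
    rw [hvolAt, hVol]
    apply Finset.sum_congr _ (fun _ _ => rfl)
    ext u; simp [hroot u v]
  have hvolH : ∀ v : V, volAt H v = deg v := by
    intro v
    rw [hvolAt]
    have : (univ.filter fun u => m H u = m H v) = {v} := by
      ext u
      simp only [Finset.mem_filter, Finset.mem_univ, true_and, Finset.mem_singleton]
      exact ⟨fun hu => hleaf u v hu, fun hu => by rw [hu]⟩
    rw [this, Finset.sum_singleton]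
  -- modules shrink going down the tree
  have hvolmono : ∀ h, 1 ≤ h → h ≤ H → ∀ v : V, volAt h v ≤ volAt (h - 1) v := by
    intro h h1 h2 v
    rw [hvolAt, hvolAt]
    apply Finset.sum_le_sum_of_subset_of_nonneg
    · intro u hu
      simp only [Finset.mem_filter, Finset.mem_univ, true_and] at hu ⊢
      exact hmono h h1 h2 u v hu
    · exact fun u _ _ => le_of_lt (hdpos u)
  -- the per-level log ratio is nonpositive
  have hLnonpos : ∀ h, 1 ≤ h → h ≤ H → ∀ v : V,
      logb 2 (volAt h v / volAt (h - 1) v) ≤ 0 := by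
    intro h h1 h2 v
    exact Real.logb_nonpos one_lt_two (le_of_lt (div_pos (hvolpos h v) (hvolpos (h - 1) v)))
      ((div_le_one (hvolpos (h - 1) v)).mpr (hvolmono h h1 h2 v))
  -- telescoping: the levelwise log ratios sum to the global log ratio
  have htel : ∀ v : V,
      ∑ h ∈ Icc 1 H, logb 2 (volAt h v / volAt (h - 1) v) = logb 2 (deg v / Vol) := by
    intro v
    have key : ∀ h ∈ Icc 1 H, logb 2 (volAt h v / volAt (h - 1) v)
        = logb 2 (volAt h v) - logb 2 (volAt (h - 1) v) := fun h _ =>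
      Real.logb_div (ne_of_gt (hvolpos h v)) (ne_of_gt (hvolpos (h - 1) v))
    rw [Finset.sum_congr rfl key, ← Finset.Ico_add_one_right_eq_Icc, Finset.sum_Ico_eq_sum_range]
    have hsimp : ∀ i : ℕ,
        (logb 2 (volAt (1 + i) v) - logb 2 (volAt (1 + i - 1) v))
          = (logb 2 (volAt (i + 1) v) - logb 2 (volAt i v)) := by
      intro i
      have e2 : 1 + i - 1 = i := by omega
      have e1 : 1 + i = i + 1 := by omega
      rw [e2, e1]
    rw [Finset.sum_congr rfl (fun i _ => hsimp i)]
    have e3 : H + 1 - 1 = H := by omega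
    rw [e3, Finset.sum_range_sub (fun i => logb 2 (volAt i v)), hvolH, hvol0]
    rw [Real.logb_div (ne_of_gt (hdpos v)) (ne_of_gt hVolpos)]
  -- per-level inequality
  have hlevel : ∀ h ∈ Icc 1 H,
      ∑ v, (deg v - ∑ j ∈ univ.filter (fun j => m h j = m h v), A v j)
          * logb 2 (volAt h v / volAt (h - 1) v)
        ≤ ∑ v, Φ * (deg v * logb 2 (volAt h v / volAt (h - 1) v)) := by
    intro h hh
    obtain ⟨h1, h2⟩ := Finset.mem_Icc.mp hh
    rw [← Finset.sum_fiberwise_of_maps_to (g := m h) (t := (univ : Finset ι))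
        (fun x _ => Finset.mem_univ (m h x)),
      ← Finset.sum_fiberwise_of_maps_to (g := m h) (t := (univ : Finset ι))
        (fun x _ => Finset.mem_univ (m h x))]
    apply Finset.sum_le_sum
    intro c _
    rcases (univ.filter fun v : V => m h v = c).eq_empty_or_nonempty with hc | hc
    · rw [hc]; simp
    obtain ⟨v₀, hv₀⟩ := hc
    have hv₀c : m h v₀ = c := (Finset.mem_filter.mp hv₀).2
    have hmem : ∀ v ∈ univ.filter (fun v : V => m h v = c), m h v = m h v₀ := by
      intro v hv
      rw [(Finset.mem_filter.mp hv).2, hv₀c]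
    set L : ℝ := logb 2 (volAt h v₀ / volAt (h - 1) v₀) with hL
    have hLconst : ∀ v ∈ univ.filter (fun v : V => m h v = c),
        logb 2 (volAt h v / volAt (h - 1) v) = L := by
      intro v hv
      rw [hvol_congr h v v₀ (hmem v hv),
        hvol_congr (h - 1) v v₀ (hmono h h1 h2 v v₀ (hmem v hv))]
    -- left side equals gAt h v₀ * L
    have hleft : ∑ v ∈ univ.filter (fun v : V => m h v = c),
        (deg v - ∑ j ∈ univ.filter (fun j => m h j = m h v), A v j)
          * logb 2 (volAt h v / volAt (h - 1) v)
        = gAt h v₀ * L := by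
      have step1 : ∀ v ∈ univ.filter (fun v : V => m h v = c),
          (deg v - ∑ j ∈ univ.filter (fun j => m h j = m h v), A v j)
            * logb 2 (volAt h v / volAt (h - 1) v)
          = (∑ j ∈ univ.filter (fun j => m h j ≠ m h v₀), A v j) * L := by
        intro v hv
        rw [hLconst v hv]
        congr 1
        have hsplit : (∑ j ∈ univ.filter (fun j => m h j = m h v₀), A v j)
            + (∑ j ∈ univ.filter (fun j => ¬ m h j = m h v₀), A v j) = deg v := by
          rw [hdeg v]
          exact Finset.sum_filter_add_sum_filter_not _ _ _
        have hvv : (univ.filter fun j : V => m h j = m h v)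
            = univ.filter fun j : V => m h j = m h v₀ := by
          apply Finset.filter_congr
          intro j _
          simp [hmem v hv]
        rw [hvv]
        linarith [hsplit]
      rw [Finset.sum_congr rfl step1, ← Finset.sum_mul]
      congr 1
      rw [hgAt]
      apply Finset.sum_congr _ (fun _ _ => rfl)
      ext x
      simp [hv₀c]
    -- right side equals Φ * (volAt h v₀ * L)
    have hright : ∑ v ∈ univ.filter (fun v : V => m h v = c),
        Φ * (deg v * logb 2 (volAt h v / volAt (h - 1) v))
        = Φ * (volAt h v₀ * L) := by
      have step1 : ∀ v ∈ univ.filter (fun v : V => m h v = c),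
          Φ * (deg v * logb 2 (volAt h v / volAt (h - 1) v)) = Φ * (deg v * L) := by
        intro v hv; rw [hLconst v hv]
      rw [Finset.sum_congr rfl step1, ← Finset.mul_sum]
      congr 1
      rw [← Finset.sum_mul]
      congr 1
      rw [hvolAt]
      apply Finset.sum_congr _ (fun _ _ => rfl)
      ext x
      simp [hv₀c]
    rw [hleft, hright]
    have hΦv : Φ * volAt h v₀ ≤ gAt h v₀ :=
      (le_div_iff₀ (hvolpos h v₀)).mp (hΦ h hh v₀)
    have hLle : L ≤ 0 := hLnonpos h h1 h2 v₀
    calc gAt h v₀ * L ≤ (Φ * volAt h v₀) * L :=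
          mul_le_mul_of_nonpos_right hΦv hLle
      _ = Φ * (volAt h v₀ * L) := by ring
  -- assemble
  have hH1' : Φ * H1 = -(1 / Vol) * ∑ h ∈ Icc 1 H, ∑ v,
      Φ * (deg v * logb 2 (volAt h v / volAt (h - 1) v)) := by
    rw [hH1]
    have : ∑ v, deg v * logb 2 (deg v / Vol)
        = ∑ h ∈ Icc 1 H, ∑ v, deg v * logb 2 (volAt h v / volAt (h - 1) v) := by
      rw [Finset.sum_comm]
      apply Finset.sum_congr rfl
      intro v _
      rw [← Finset.mul_sum, htel v]
    rw [this]
    have hT : ∑ h ∈ Icc 1 H, ∑ v, Φ * (deg v * logb 2 (volAt h v / volAt (h - 1) v))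
        = Φ * ∑ h ∈ Icc 1 H, ∑ v, deg v * logb 2 (volAt h v / volAt (h - 1) v) := by
      rw [Finset.mul_sum]
      exact Finset.sum_congr rfl fun h _ => (Finset.mul_sum _ _ _).symm
    rw [hT]
    ring
  rw [hH1', hSI]
  have hsum := Finset.sum_le_sum hlevel
  have hinv : (0 : ℝ) ≤ 1 / Vol := by positivity
  simp only [neg_mul, neg_le_neg_iff]
  exact mul_le_mul_of_nonneg_left hsum hinv
end
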